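/- arXiv:2207.03969 — 5 statements merged into one kernel-verified Lean document; each statement's English description precedes it below -/
import Mathlib

section
/- For every triple of infinite regular cardinals μ < λ < κ, for every stationary set S ⊆ E^κ_λ, and for every λ-bounded C-sequence ⟨C_δ : δ ∈ S⟩, for every club D ⊆ κ there exists δ ∈ S such that sup(C_δ ∩ D ∩ E^κ_μ) = δ. -/
open Set Ordinal

noncomputable section

abbrev O : Type 1 := Ordinal.{0}

/-- `ssup A` is the strict supremum of a set of ordinals. -/
def ssup (A : Set O) : O := sSup ((· + 1) '' A)

/-- `acc⁺(A)`: accumulation points below the strict sup. -/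
def accP (A : Set O) : Set O := {α | α < ssup A ∧ 0 < α ∧ sSup (A ∩ Iio α) = α}

def accOf (A : Set O) : Set O := A ∩ accP A

def nacc (A : Set O) : Set O := A \ accOf A

def clOf (A : Set O) : Set O := A ∪ accP A

/-- order type of a set of ordinals -/
def otp (A : Set O) : Ordinal.{1} := Ordinal.type (Subrel ((· < ·) : O → O → Prop) (· ∈ A))

/-- lift a small ordinal one universe up -/
def olift (a : O) : Ordinal.{1} := Ordinal.lift.{1} a

/-- `suc_σ(A)`: elements of `A` whose index in `A` is `j+1` for some `j < σ`. -/
def sucSet (σ : Ordinal.{1}) (A : Set O) : Set O := {β | β ∈ A ∧ ∃ j < σ, otp (A ∩ Iio β) = j + 1}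

def UnbIn (A : Set O) (δ : O) : Prop := ∀ α < δ, ∃ β ∈ A, α < β ∧ β < δ

def IsClubIn (C : Set O) (δ : O) : Prop :=
  C ⊆ Iio δ ∧ UnbIn C δ ∧ ∀ α < δ, 0 < α → sSup (C ∩ Iio α) = α → α ∈ C

def IsStatIn (S : Set O) (δ : O) : Prop :=
  S ⊆ Iio δ ∧ ∀ D, IsClubIn D δ → (S ∩ D).Nonempty

def Ecof (κ : O) (lam : Cardinal.{0}) : Set O := {δ | δ < κ ∧ δ.cof = lam}

def PhiSup (B x : Set O) : Set O :=
  if sSup (x ∩ B) = sSup x then clOf (x ∩ B) else x \ Iio (sSup (x ∩ B))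

def PhiD (D x : Set O) : Set O :=
  if sSup (D ∩ Iio (sSup x)) = sSup x then
    {γ | ∃ η ∈ x, sInf D < η ∧ γ = sSup (D ∩ Iio η)}
  else x \ Iio (sSup (D ∩ Iio (sSup x)))

/-- `cf(δ)`-additive proper ideal on `δ` extending the bounded ideal. -/
def GoodIdeal (δ : O) (J : Set (Set O)) : Prop :=
  (∀ A B : Set O, A ⊆ B → B ∈ J → A ∈ J) ∧
  (Iio δ ∉ J) ∧
  (∀ B : Set O, B ⊆ Iio δ → sSup B < δ → B ∈ J) ∧
  (∀ ξ < (Ordinal.cof δ).ord, ∀ f : O → Set O, (∀ i < ξ, f i ∈ J) → (⋃ i ∈ Iio ξ, f i) ∈ J)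

/-!
Every `δ ∈ S` that is a limit of `D` works, and such `δ` exist because the limits of `D` form a
club in the regular uncountable `κ`. For such `δ`, `C δ ∩ D` is club in `δ` since `cf δ = λ > ℵ₀`.
A club `E` in `δ` with `μ < cf δ` contains points of cofinality `μ` above any `β < δ`: enumerating
`E ∩ (β, δ) ∪ [δ, ∞)` by a normal function `e`, the first `cf δ` values stay below `δ`, and
`cf (e μ) = cf μ = μ`.
-/

open Cardinal Order

lemma sSup_inter_Iio_le (A : Set O) (α : O) : sSup (A ∩ Iio α) ≤ α :=
  csSup_le' fun _ hx => hx.2.le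

lemma sSup_inter_Iio_eq_of_subset {A B : Set O} {α : O} (hAB : A ⊆ B)
    (h : sSup (A ∩ Iio α) = α) : sSup (B ∩ Iio α) = α :=
  (sSup_inter_Iio_le B α).antisymm <|
    h.ge.trans (csSup_le_csSup' ⟨α, fun _ hx => hx.2.le⟩ (inter_subset_inter_left _ hAB))

section IsClubIn

variable {E : Set O} {δ : O}

lemma IsClubIn.mem_of_isLUB (hE : IsClubIn E δ) {d : Set O} (hdE : d ⊆ E) (hd : d.Nonempty)
    {a : O} (ha : IsLUB d a) (haδ : a < δ) : a ∈ E := by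
  by_cases had : a ∈ d
  · exact hdE had
  have hlt : ∀ x ∈ d, x < a := fun x hx => (ha.1 hx).lt_of_ne (ne_of_mem_of_not_mem hx had)
  have hsup : sSup (E ∩ Iio a) = a := by
    refine (sSup_inter_Iio_le E a).antisymm (le_of_forall_lt fun b hb => ?_)
    obtain ⟨x, hxd, hbx⟩ := (lt_isLUB_iff ha).1 hb
    exact lt_csSup_of_lt ⟨a, fun _ hy => hy.2.le⟩ ⟨hdE hxd, hlt x hxd⟩ hbx
  obtain ⟨x, hx⟩ := hd
  exact hE.2.2 a haδ (pos_of_gt (hlt x hx)) hsup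

lemma IsClubIn.isClub_preimage (hE : IsClubIn E δ) : IsClub (((↑) : Iio δ → O) ⁻¹' E) := by
  refine ⟨dirSupClosed_iff_of_linearOrder.2 fun d hdE hd a ha => ?_, fun a => ?_⟩
  · have hlub : IsLUB (((↑) : Iio δ → O) '' d) a := by
      refine ⟨forall_mem_image.2 fun x hx => ha.1 hx, fun b hb => ?_⟩
      rcases lt_or_ge b δ with hbδ | hδb
      · have hub : (⟨b, hbδ⟩ : Iio δ) ∈ upperBounds d := fun x hx => hb (mem_image_of_mem _ hx)
        exact ha.2 hub
      · exact a.2.le.trans hδb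
    exact hE.mem_of_isLUB (image_subset_iff.2 hdE) (hd.image _) hlub a.2
  · obtain ⟨b, hbE, hab, hbδ⟩ := hE.2.1 a a.2
    exact ⟨⟨b, hbδ⟩, hbE, hab.le⟩

lemma isClubIn_image_coe {s : Set (Iio δ)} (hδ : IsSuccLimit δ) (hs : IsClub s) :
    IsClubIn ((↑) '' s) δ := by
  refine ⟨image_subset_iff.2 fun x _ => x.2, fun a ha => ?_, fun a ha h0 hsup => ?_⟩
  · obtain ⟨b, hbs, hab⟩ := hs.isCofinal (⟨succ a, hδ.succ_lt ha⟩ : Iio δ)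
    exact ⟨b, mem_image_of_mem _ hbs, (lt_succ a).trans_le hab, b.2⟩
  · have hlub : IsLUB {x | x ∈ s ∧ x.1 < a} ⟨a, ha⟩ := by
      refine ⟨fun x hx => hx.2.le, fun b hb => hsup.ge.trans (csSup_le' ?_)⟩
      rintro _ ⟨⟨x, hx, rfl⟩, hxa⟩
      exact hb ⟨hx, hxa⟩
    obtain ⟨_, ⟨⟨x, hx, rfl⟩, hxa⟩, -⟩ := exists_lt_of_lt_csSup' (h0.trans_eq hsup.symm)
    exact ⟨_, hs.isLUB_mem (t := {x | x ∈ s ∧ x.1 < a}) (fun x hx => hx.1) ⟨x, hx, hxa⟩ hlub, rfl⟩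

lemma IsClubIn.inter {F : Set O} (hδ : ℵ₀ < δ.cof) (hE : IsClubIn E δ) (hF : IsClubIn F δ) :
    IsClubIn (E ∩ F) δ := by
  have hcof : Order.cof (Iio δ) ≠ ℵ₀ := by
    rw [Ordinal.cof_Iio, ← Ordinal.lift_cof, Ne, Cardinal.lift_eq_aleph0]
    exact hδ.ne'
  have := isClubIn_image_coe (one_lt_cof_iff.1 (one_lt_aleph0.trans hδ))
    (hE.isClub_preimage.inter hcof hF.isClub_preimage)
  rwa [← preimage_inter, Subtype.image_preimage_coe,
    inter_eq_right.2 (inter_subset_left.trans hE.1)] at this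

lemma IsClubIn.inter_Ioi (hE : IsClubIn E δ) {β : O} (hβ : β < δ) : IsClubIn (E ∩ Ioi β) δ := by
  refine ⟨inter_subset_left.trans hE.1, fun a ha => ?_, fun a ha h0 hsup => ?_⟩
  · obtain ⟨b, hbE, hab, hbδ⟩ := hE.2.1 (max a β) (max_lt ha hβ)
    exact ⟨b, ⟨hbE, (le_max_right a β).trans_lt hab⟩, (le_max_left a β).trans_lt hab, hbδ⟩
  · obtain ⟨x, hx, -⟩ := exists_lt_of_lt_csSup' (h0.trans_eq hsup.symm)
    exact ⟨hE.2.2 a ha h0 (sSup_inter_Iio_eq_of_subset inter_subset_left hsup),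
      show β < a from hx.1.2.trans hx.2⟩

lemma isCofinal_union_Ici (E : Set O) (δ : O) : IsCofinal (E ∪ Ici δ) :=
  fun x => ⟨max x δ, Or.inr (le_max_right x δ), le_max_left x δ⟩

lemma IsClubIn.dirSupClosed_union_Ici (hE : IsClubIn E δ) : DirSupClosed (E ∪ Ici δ) := by
  refine dirSupClosed_iff_of_linearOrder.2 fun d hd hne a ha => ?_
  rcases le_or_gt δ a with hδa | haδ
  · exact Or.inr hδa
  refine Or.inl (hE.mem_of_isLUB (fun x hx => ?_) hne ha haδ)
  exact (hd hx).resolve_right ((ha.1 hx).trans_lt haδ).not_ge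

lemma IsClubIn.enum_union_Ici_lt (hE : IsClubIn E δ) {i : O} (hi : i < δ.cof.ord) :
    (Order.enum (E ∪ Ici δ) (isCofinal_union_Ici E δ) i : O) < δ := by
  induction i using WellFoundedLT.induction with | ind i IH
  set e := Order.enum (E ∪ Ici δ) (isCofinal_union_Ici E δ)
  have hsup : ⨆ j : Iio i, (e j : O) < δ := by
    refine Ordinal.lift_iSup_lt_of_lt_cof ?_ fun j => IH j j.2 (j.2.trans hi)
    rwa [Cardinal.mk_Iio_ordinal, Cardinal.lift_lift, ← Ordinal.lift_cof, Cardinal.lift_lt,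
      ← lt_ord]
  obtain ⟨x, hxE, hx, hxδ⟩ := hE.2.1 _ hsup
  have hle : (e i : O) ≤ x := Order.enum_le_of_forall_lt (Or.inl hxE) fun j hj =>
    (le_ciSup Ordinal.bddAbove_of_small (⟨j, hj⟩ : Iio i)).trans_lt hx
  exact hle.trans_lt hxδ

lemma IsClubIn.exists_cof_eq (hE : IsClubIn E δ) {μ : Cardinal.{0}} (hμ : μ.IsRegular)
    (hμδ : μ < δ.cof) : ∃ α ∈ E, sSup (E ∩ Iio α) = α ∧ α.cof = μ := by
  set f := Order.enum (E ∪ Ici δ) (isCofinal_union_Ici E δ)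
  set e := Subtype.val ∘ f
  have he : IsNormal e := isNormal_enum_iff_dirSupClosed.2 hE.dirSupClosed_union_Ici
  have hlim : IsSuccLimit μ.ord := isSuccLimit_ord hμ.aleph0_le
  have hmem : ∀ j ≤ μ.ord, e j ∈ E := fun j hj =>
    (f j).2.resolve_right (hE.enum_union_Ici_lt (hj.trans_lt (ord_lt_ord.2 hμδ))).not_ge
  refine ⟨e μ.ord, hmem _ le_rfl, ?_, by rw [Ordinal.cof_map_of_isNormal he hlim, hμ.cof_ord]⟩
  refine (sSup_inter_Iio_le E _).antisymm ((he.le_iff_forall_le hlim).2 fun j hj => ?_)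
  exact le_csSup ⟨_, fun _ hx => hx.2.le⟩ ⟨hmem j hj.le, he.strictMono hj⟩

lemma IsClubIn.exists_gt_cof_eq (hE : IsClubIn E δ) {μ : Cardinal.{0}} (hμ : μ.IsRegular)
    (hμδ : μ < δ.cof) {β : O} (hβ : β < δ) :
    ∃ α ∈ E, β < α ∧ sSup (E ∩ Iio α) = α ∧ α.cof = μ := by
  obtain ⟨α, ⟨hαE, hβα⟩, hsup, hcof⟩ := (hE.inter_Ioi hβ).exists_cof_eq hμ hμδ
  exact ⟨α, hαE, hβα, sSup_inter_Iio_eq_of_subset inter_subset_left hsup, hcof⟩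

end IsClubIn

def accIn (D : Set O) (κ : O) : Set O := {α | α < κ ∧ 0 < α ∧ sSup (D ∩ Iio α) = α}

section accIn

variable {D : Set O} {κ : O}

lemma IsClubIn.isClubIn_accIn (hD : IsClubIn D κ) (hκ : ℵ₀ < κ.cof) :
    IsClubIn (accIn D κ) κ := by
  refine ⟨fun α hα => hα.1, fun β hβ => ?_, fun α hα h0 hsup => ⟨hα, h0, ?_⟩⟩
  · obtain ⟨α, hαD, hβα, hsup, -⟩ := hD.exists_gt_cof_eq isRegular_aleph0 hκ hβ
    exact ⟨α, ⟨hD.1 hαD, pos_of_gt hβα, hsup⟩, hβα, hD.1 hαD⟩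
  · refine (sSup_inter_Iio_le D α).antisymm (le_of_forall_lt fun b hb => ?_)
    obtain ⟨t, ⟨htacc, htα⟩, hbt⟩ := exists_lt_of_lt_csSup' (hb.trans_eq hsup.symm)
    obtain ⟨d, ⟨hdD, hdt⟩, hbd⟩ := exists_lt_of_lt_csSup' (hbt.trans_eq htacc.2.2.symm)
    exact lt_csSup_of_lt ⟨α, fun _ hx => hx.2.le⟩ ⟨hdD, show d < α from hdt.trans htα⟩ hbd

lemma IsClubIn.inter_Iio (hD : IsClubIn D κ) {δ : O} (hδ : δ ∈ accIn D κ) :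
    IsClubIn (D ∩ Iio δ) δ := by
  refine ⟨inter_subset_right, fun b hb => ?_, fun a ha h0 hsup => ⟨?_, ha⟩⟩
  · obtain ⟨d, hd, hbd⟩ := exists_lt_of_lt_csSup' (hb.trans_eq hδ.2.2.symm)
    exact ⟨d, hd, hbd, hd.2⟩
  · exact hD.2.2 a (ha.trans hδ.1) h0 (sSup_inter_Iio_eq_of_subset inter_subset_left hsup)

end accIn

theorem statement0_general (μ lam κ : Cardinal.{0})
    (hμ : μ.IsRegular) (hκ : κ.IsRegular)
    (hml : μ < lam) (hlk : lam < κ)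
    (S : Set O) (hSsub : S ⊆ Ecof κ.ord lam) (hS : IsStatIn S κ.ord)
    (C : O → Set O)
    (hC : ∀ δ ∈ S, IsClubIn (C δ) δ ∧ otp (C δ) ≤ olift lam.ord)
    (D : Set O) (hD : IsClubIn D κ.ord) :
    ∃ δ ∈ S, sSup (C δ ∩ D ∩ Ecof κ.ord μ) = δ := by
  have hlam : ℵ₀ < lam := hμ.aleph0_le.trans_lt hml
  obtain ⟨δ, hδS, hδacc⟩ :=
    hS.2 _ (hD.isClubIn_accIn (by rw [hκ.cof_ord]; exact hlam.trans hlk))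
  obtain ⟨hδκ, hδcof⟩ := hSsub hδS
  have hCδ := (hC δ hδS).1
  have hCD : IsClubIn (C δ ∩ (D ∩ Iio δ)) δ := hCδ.inter (hδcof ▸ hlam) (hD.inter_Iio hδacc)
  have hunb : ∀ β < δ, ∃ α ∈ C δ ∩ D ∩ Ecof κ.ord μ, β < α := fun β hβ => by
    obtain ⟨α, ⟨hαC, hαD, hαδ⟩, hβα, -, hαcof⟩ := hCD.exists_gt_cof_eq hμ (hδcof ▸ hml) hβ
    exact ⟨α, ⟨⟨hαC, hαD⟩, hαδ.trans hδκ, hαcof⟩, hβα⟩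
  obtain ⟨α, hα, -⟩ := hunb 0 hδacc.2.1
  exact ⟨δ, hδS, csSup_eq_of_forall_le_of_forall_lt_exists_gt ⟨α, hα⟩
    (fun x hx => (hCδ.1 hx.1.1).le) hunb⟩

/-- any λ-bounded C-sequence over a stationary `S ⊆ E^κ_λ` witnesses
`CG_λ(S, E^κ_μ, -)` for regular `μ < λ < κ`. -/
theorem statement0 (μ lam κ : Cardinal.{0})
    (hμ : μ.IsRegular) (hlam : lam.IsRegular) (hκ : κ.IsRegular)
    (hml : μ < lam) (hlk : lam < κ)
    (S : Set O) (hSsub : S ⊆ Ecof κ.ord lam) (hS : IsStatIn S κ.ord)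
    (C : O → Set O)
    (hC : ∀ δ ∈ S, IsClubIn (C δ) δ ∧ otp (C δ) ≤ olift lam.ord)
    (D : Set O) (hD : IsClubIn D κ.ord) :
    ∃ δ ∈ S, sSup (C δ ∩ D ∩ Ecof κ.ord μ) = δ :=
  statement0_general μ lam κ hμ hκ hml hlk S hSsub hS C hC D hD
end
end

section
/- Suppose κ ≥ ℵ₂ is regular, S ⊆ E^κ_{ℵ₀} is stationary, and ⟨C_δ : δ ∈ S⟩ is an ω-bounded C-sequence (each C_δ cofinal in δ of order type ω). Then there exists a club D ⊆ κ such that for every club E ⊆ κ there exist δ ∈ S and β < δ with Φ_D(C_δ) \ β ⊆ E, where Φ_D(x) = {sup(D ∩ η) : η ∈ x, η > min(D)} when sup(D ∩ sup(x)) = sup(x), and Φ_D(x) = x \ sup(D ∩ sup(x)) otherwise. -/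
open Set Ordinal

noncomputable section

/-!
If no club works, choose for every club `D` a club `E D` on which `Φ_D` fails, and iterate
`D i = ⋂_{j<i} (D j ∩ E (D j))` up to `ω₁`; since `ω₁ < κ` every stage is a club. Take `δ ∈ S`
that is a limit of `D ω₁`. For each `η ∈ C δ` the ordinals `sup (D i ∩ η)` decrease in `i`, so
they are eventually constant below `ω₁`, and as `C δ` is countable one `i < ω₁` stabilises all of
them at once. As `δ` is a limit of `D i`, `Φ_{D i}(C δ)` consists of the points
`sup (D i ∩ η) = sup (D (i+1) ∩ η)`, and the nonzero ones lie in the closed set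
`D (i+1) ⊆ E (D i)`, contradicting the choice of `E (D i)`.
-/

open Cardinal

universe u

lemma sSup_inter_Iio_eq_iff_unbIn {A : Set O} {α : O} :
    sSup (A ∩ Iio α) = α ↔ UnbIn A α := by
  refine ⟨fun h ξ hξ => ?_, fun h => ?_⟩
  · rw [← h] at hξ
    obtain ⟨β, ⟨hβA, hβα⟩, hξβ⟩ := exists_lt_of_lt_csSup' hξ
    exact ⟨β, hβA, hξβ, hβα⟩
  · refine le_antisymm (csSup_le' fun β hβ => hβ.2.le) (le_of_forall_lt fun ξ hξ => ?_)
    obtain ⟨β, hβA, hξβ, hβα⟩ := h ξ hξ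
    exact hξβ.trans_le (le_csSup ⟨α, fun _ hx => hx.2.le⟩ ⟨hβA, hβα⟩)

lemma UnbIn.mono {A B : Set O} {α : O} (h : UnbIn A α) (hAB : A ⊆ B) : UnbIn B α :=
  fun ξ hξ => let ⟨β, hβ, hξβ⟩ := h ξ hξ; ⟨β, hAB hβ, hξβ⟩

lemma UnbIn.trans {A B : Set O} {α : O} (hA : UnbIn A α) (hB : ∀ β ∈ A, UnbIn B β) :
    UnbIn B α := fun ξ hξ => by
  obtain ⟨β, hβA, hξβ, hβα⟩ := hA ξ hξ
  obtain ⟨γ, hγB, hξγ, hγβ⟩ := hB β hβA ξ hξβ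
  exact ⟨γ, hγB, hξγ, hγβ.trans hβα⟩

lemma isClubIn_of_unbIn {C : Set O} {θ : O} (hsub : C ⊆ Iio θ) (hunb : UnbIn C θ)
    (hcl : ∀ α < θ, 0 < α → UnbIn C α → α ∈ C) : IsClubIn C θ :=
  ⟨hsub, hunb, fun α hαθ hα h => hcl α hαθ hα (sSup_inter_Iio_eq_iff_unbIn.1 h)⟩

lemma IsClubIn.mem_of_unbIn {C : Set O} {θ α : O} (hC : IsClubIn C θ) (hαθ : α < θ)
    (hα : 0 < α) (h : UnbIn C α) : α ∈ C :=
  hC.2.2 α hαθ hα (sSup_inter_Iio_eq_iff_unbIn.2 h)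

lemma IsClubIn.sSup_mem {C A : Set O} {θ : O} (hC : IsClubIn C θ) (hAC : A ⊆ C)
    (hAθ : sSup A < θ) (hA : 0 < sSup A) : sSup A ∈ C := by
  by_cases hmem : sSup A ∈ A
  · exact hAC hmem
  refine hC.mem_of_unbIn hAθ hA (UnbIn.mono (fun ξ hξ => ?_) hAC)
  obtain ⟨β, hβ, hξβ⟩ := exists_lt_of_lt_csSup' hξ
  have hbdd : BddAbove A := ⟨θ, fun _ hx => (hC.1 (hAC hx)).le⟩
  exact ⟨β, hβ, hξβ, (le_csSup hbdd hβ).lt_of_ne fun h => hmem (h ▸ hβ)⟩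

section Club

variable {κ : Cardinal.{0}}

lemma exists_gt_forall_unbIn (hκ : κ.IsRegular) (hω : ℵ₀ < κ) {ι : Type u}
    (hι : lift.{0} #ι < lift.{u} κ) {A : ι → Set O} (hA : ∀ j, UnbIn (A j) κ.ord)
    {α : O} (hα : α < κ.ord) : ∃ β, α < β ∧ β < κ.ord ∧ ∀ j, UnbIn (A j) β := by
  have hA' : ∀ j, ∀ x < κ.ord, ∃ b ∈ A j, x < b ∧ b < κ.ord := hA
  choose! next hnext using hA'
  -- `g x` lies above `x` and above a point of every `A j` past `x`; iterate it `ω` times.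
  let g : O → O := fun x => Order.succ (max x (⨆ j, next j x))
  have hbdd : ∀ x < κ.ord, BddAbove (range fun j => next j x) :=
    fun x hx => ⟨κ.ord, by rintro _ ⟨j, rfl⟩; exact (hnext j x hx).2.2.le⟩
  have hg : ∀ x < κ.ord, g x < κ.ord := by
    refine fun x hx => (Cardinal.isSuccLimit_ord hκ.aleph0_le).succ_lt (max_lt hx ?_)
    refine Ordinal.lift_iSup_lt_of_lt_cof ?_ fun j => (hnext j x hx).2.2
    rwa [← Ordinal.lift_cof, hκ.cof_ord]
  have hnext_lt : ∀ j, ∀ x < κ.ord, next j x < g x := fun j x hx =>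
    Order.lt_succ_of_le ((le_ciSup (hbdd x hx) j).trans (le_max_right _ _))
  have hβ : Ordinal.nfp g α < κ.ord := nfp_lt_ord_of_isRegular hκ hω.ne' hg hα
  refine ⟨Ordinal.nfp g α, ?_, hβ, fun j ξ hξ => ?_⟩
  · exact (Order.lt_succ_of_le (le_max_left _ _)).trans_le (Ordinal.iterate_le_nfp g α 1)
  obtain ⟨n, hn⟩ := Ordinal.lt_nfp_iff.1 hξ
  have hx : g^[n] α < κ.ord := (Ordinal.iterate_le_nfp g α n).trans_lt hβ
  refine ⟨next j (g^[n] α), (hnext j _ hx).1, hn.trans (hnext j _ hx).2.1, ?_⟩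
  refine (hnext_lt j _ hx).trans_le ?_
  simpa only [Function.iterate_succ_apply'] using Ordinal.iterate_le_nfp g α (n + 1)

lemma isClubIn_iInter (hκ : κ.IsRegular) (hω : ℵ₀ < κ) {ι : Type u}
    (hι : lift.{0} #ι < lift.{u} κ) {A : ι → Set O} (hA : ∀ j, IsClubIn (A j) κ.ord) :
    IsClubIn (Iio κ.ord ∩ ⋂ j, A j) κ.ord := by
  refine isClubIn_of_unbIn inter_subset_left (fun α hα => ?_) fun α hα h0 h =>
    ⟨hα, mem_iInter.2 fun j => (hA j).mem_of_unbIn hα h0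
      (h.mono (inter_subset_right.trans (iInter_subset _ j)))⟩
  obtain ⟨β, hαβ, hβ, hβA⟩ := exists_gt_forall_unbIn hκ hω hι (fun j => (hA j).2.1) hα
  exact ⟨β, ⟨hβ, mem_iInter.2 fun j => (hA j).mem_of_unbIn hβ (pos_of_gt hαβ) (hβA j)⟩, hαβ, hβ⟩

lemma isClubIn_inter (hκ : κ.IsRegular) (hω : ℵ₀ < κ) {C D : Set O}
    (hC : IsClubIn C κ.ord) (hD : IsClubIn D κ.ord) : IsClubIn (C ∩ D) κ.ord := by
  have h := isClubIn_iInter hκ hω (ι := Bool) (by simpa using ofNat_lt_aleph0.trans hω)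
    (A := fun b => cond b C D) (by simpa using ⟨hD, hC⟩)
  rwa [← inter_eq_iInter, inter_eq_right.2 (inter_subset_left.trans hC.1)] at h

def accBelow (D : Set O) (θ : O) : Set O := {α | α < θ ∧ 0 < α ∧ UnbIn D α}

lemma isClubIn_accBelow (hκ : κ.IsRegular) (hω : ℵ₀ < κ) {D : Set O} (hD : UnbIn D κ.ord) :
    IsClubIn (accBelow D κ.ord) κ.ord := by
  refine isClubIn_of_unbIn (fun α hα => hα.1) (fun α hα => ?_) fun α hα h0 h =>
    ⟨hα, h0, h.trans fun β hβ => hβ.2.2⟩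
  obtain ⟨β, hαβ, hβ, hβD⟩ := exists_gt_forall_unbIn hκ hω (ι := Unit)
    (by simpa using one_lt_aleph0.trans hω) (fun _ => hD) hα
  exact ⟨β, ⟨hβ, pos_of_gt hαβ, hβD ()⟩, hαβ, hβ⟩

def clubIter (θ : O) (E : Set O → Set O) (i : O) : Set O :=
  Iio θ ∩ ⋂ j : Iio i, (clubIter θ E j ∩ E (clubIter θ E j))
termination_by i
decreasing_by exact j.2

lemma clubIter_subset_inter (θ : O) (E : Set O → Set O) {i j : O} (h : j < i) :
    clubIter θ E i ⊆ clubIter θ E j ∩ E (clubIter θ E j) := by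
  rw [clubIter]
  exact inter_subset_right.trans (iInter_subset (fun k : Iio i => _) ⟨j, h⟩)

lemma clubIter_antitone (θ : O) (E : Set O → Set O) : Antitone (clubIter θ E) := by
  intro j i h
  rcases h.eq_or_lt with rfl | h
  · rfl
  · exact (clubIter_subset_inter θ E h).trans inter_subset_left

lemma isClubIn_clubIter (hκ : κ.IsRegular) (hω : ℵ₀ < κ)
    {E : Set O → Set O} (hE : ∀ D, IsClubIn D κ.ord → IsClubIn (E D) κ.ord) {i : O}
    (hi : i.card < κ) : IsClubIn (clubIter κ.ord E i) κ.ord := by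
  induction i using WellFoundedLT.induction with
  | ind i IH =>
    have hj : ∀ j : Iio i, IsClubIn (clubIter κ.ord E j) κ.ord := fun j =>
      IH j j.2 ((card_le_card j.2.le).trans_lt hi)
    rw [clubIter]
    exact isClubIn_iInter hκ hω (by simpa [← Ordinal.lift_card] using hi) fun j =>
      isClubIn_inter hκ hω (hj j) (hE _ (hj j))

end Club

lemma Antitone.exists_forall_ge_eq_on {α β : Type*} [Preorder α] [LinearOrder β]
    [WellFoundedLT β] {f : α → β} (hf : Antitone f) {s : Set α} (hs : s.Nonempty) :
    ∃ i₀ ∈ s, ∀ i ∈ s, i₀ ≤ i → f i = f i₀ := by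
  obtain ⟨_, ⟨i₀, hi₀, rfl⟩, hmin⟩ := wellFounded_lt.has_min (f '' s) (hs.image f)
  exact ⟨i₀, hi₀, fun i hi hle => (hf hle).antisymm (not_lt.1 (hmin _ (mem_image_of_mem f hi)))⟩

lemma antitone_sSup_inter_Iio {F : O → Set O} (hF : Antitone F) (η : O) :
    Antitone fun i => sSup (F i ∩ Iio η) := fun _ _ h =>
  csSup_le' fun _ hx => le_csSup ⟨η, fun _ hy => hy.2.le⟩ ⟨hF h hx.1, hx.2⟩

lemma exists_lt_omega1_sSup_inter_Iio_succ_eq {F : O → Set O} (hF : Antitone F) {x : Set O}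
    (hx : x.Countable) : ∃ i < (ℵ₁ : Cardinal).ord,
      ∀ η ∈ x, sSup (F (Order.succ i) ∩ Iio η) = sSup (F i ∩ Iio η) := by
  have hω₁ : (ℵ₁ : Cardinal.{0}).ord.cof = ℵ₁ := isRegular_aleph_one.cof_ord
  have hlim : Order.IsSuccLimit (ℵ₁ : Cardinal.{0}).ord := isSuccLimit_ord (aleph0_le_aleph 1)
  choose i₀ hi₀ hstable using fun η : x =>
    (antitone_sSup_inter_Iio hF η).exists_forall_ge_eq_on (s := Iio (ℵ₁ : Cardinal).ord)
      ⟨0, hlim.bot_lt⟩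
  have hi : ⨆ η, i₀ η < (ℵ₁ : Cardinal).ord := by
    refine Ordinal.lift_iSup_lt_of_lt_cof ?_ hi₀
    rw [← Ordinal.lift_cof, hω₁]
    calc lift #x ≤ ℵ₀ := lift_le_aleph0.2 (mk_le_aleph0_iff.2 hx.to_subtype)
      _ < lift ℵ₁ := by simp
  have hle : ∀ η, i₀ η ≤ ⨆ η, i₀ η := le_ciSup ⟨_, forall_mem_range.2 fun η => (hi₀ η).le⟩
  refine ⟨_, hi, fun η hη => ?_⟩
  rw [hstable ⟨η, hη⟩ _ (hlim.succ_lt hi) ((hle _).trans (Order.le_succ _)),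
    hstable ⟨η, hη⟩ _ hi (hle _)]

lemma countable_of_otp_eq_omega0 {A : Set O} (h : otp A = olift ω) : A.Countable := by
  have hcard := congrArg Ordinal.card h
  rw [otp, card_type, olift, ← Ordinal.lift_card, card_omega0, lift_aleph0] at hcard
  exact countable_coe_iff.1 (mk_le_aleph0_iff.1 hcard.le)

lemma phiD_diff_Iio_subset {D D' x : Set O} {θ β : O} (hD' : IsClubIn D' θ)
    (hxθ : x ⊆ Iio θ) (hx : sSup (D ∩ Iio (sSup x)) = sSup x) (hβ : 0 < β)
    (hagree : ∀ η ∈ x, sSup (D' ∩ Iio η) = sSup (D ∩ Iio η)) :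
    PhiD D x \ Iio β ⊆ D' := by
  rintro γ ⟨hγ, hβγ⟩
  rw [PhiD, if_pos hx] at hγ
  obtain ⟨η, hηx, -, rfl⟩ := hγ
  rw [← hagree η hηx] at hβγ ⊢
  have hle : sSup (D' ∩ Iio η) ≤ η := csSup_le' fun _ hy => hy.2.le
  exact hD'.sSup_mem inter_subset_left (hle.trans_lt (hxθ hηx)) (hβ.trans_le (not_lt.1 hβγ))

theorem statement5_general (κ : Cardinal.{0}) (hκ : κ.IsRegular) (hκ2 : Cardinal.aleph 2 ≤ κ)
    (S : Set O) (hS : IsStatIn S κ.ord)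
    (C : O → Set O)
    (hC : ∀ δ ∈ S, C δ ⊆ Iio δ ∧ UnbIn (C δ) δ ∧ otp (C δ) = olift Ordinal.omega0) :
    ∃ D, IsClubIn D κ.ord ∧
      ∀ E, IsClubIn E κ.ord → ∃ δ ∈ S, ∃ β < δ, PhiD D (C δ) \ Iio β ⊆ E := by
  by_contra! hcon
  choose! E hE hEfail using hcon
  have hω₁ : ℵ₁ < κ := (aleph_lt_aleph.2 one_lt_two).trans_le hκ2
  have hω : ℵ₀ < κ := aleph0_lt_aleph_one.trans hω₁
  have hclub : ∀ i ≤ (ℵ₁ : Cardinal).ord, IsClubIn (clubIter κ.ord E i) κ.ord := fun i hi =>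
    isClubIn_clubIter hκ hω hE ((card_le_of_le_ord hi).trans_lt hω₁)
  obtain ⟨δ, hδS, hδκ, hδ0, hδ⟩ := hS.2 _ (isClubIn_accBelow hκ hω (hclub _ le_rfl).2.1)
  obtain ⟨hCδ, hCunb, hCotp⟩ := hC δ hδS
  obtain ⟨β, -, hβ0, hβδ⟩ := hδ 0 hδ0
  obtain ⟨i, hi, hstable⟩ := exists_lt_omega1_sSup_inter_Iio_succ_eq (clubIter_antitone κ.ord E)
    (countable_of_otp_eq_omega0 hCotp)
  have hsupC : sSup (C δ) = δ := by
    simpa [inter_eq_left.2 hCδ] using sSup_inter_Iio_eq_iff_unbIn.2 hCunb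
  have hunb : sSup (clubIter κ.ord E i ∩ Iio (sSup (C δ))) = sSup (C δ) := by
    rw [hsupC, sSup_inter_Iio_eq_iff_unbIn]
    exact hδ.mono (clubIter_antitone κ.ord E hi.le)
  refine hEfail _ (hclub i hi.le) δ hδS β hβδ ?_
  calc PhiD (clubIter κ.ord E i) (C δ) \ Iio β ⊆ clubIter κ.ord E (Order.succ i) :=
        phiD_diff_Iio_subset (hclub _ (Order.succ_le_of_lt hi))
          (hCδ.trans (Iio_subset_Iio hδκ.le)) hunb hβ0 hstable
    _ ⊆ E (clubIter κ.ord E i) :=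
        (clubIter_subset_inter κ.ord E (Order.lt_succ i)).trans inter_subset_right

/-- for `κ ≥ ℵ₂` and an ω-bounded C-sequence over `S ⊆ E^κ_{ℵ₀}`,
some club `D` makes `Φ_D` give tail club-guessing. -/
theorem statement5 (κ : Cardinal.{0}) (hκ : κ.IsRegular) (hκ2 : Cardinal.aleph 2 ≤ κ)
    (S : Set O) (hSsub : S ⊆ Ecof κ.ord Cardinal.aleph0) (hS : IsStatIn S κ.ord)
    (C : O → Set O)
    (hC : ∀ δ ∈ S, C δ ⊆ Iio δ ∧ UnbIn (C δ) δ ∧ otp (C δ) = olift Ordinal.omega0) :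
    ∃ D, IsClubIn D κ.ord ∧
      ∀ E, IsClubIn E κ.ord → ∃ δ ∈ S, ∃ β < δ, PhiD D (C δ) \ Iio β ⊆ E :=
  statement5_general κ hκ hκ2 S hS C hC
end
end

section
/- If ⟨A_{δ,i} : δ ∈ S, i < δ⟩ enumerates a ♣⁻(S)-sequence (i.e., for each δ ∈ S, 𝒜_δ = {A_{δ,i} : i < δ}, and for every cofinal Z ⊆ κ there are δ ∈ S, i < δ with sup(A_{δ,i} ∩ Z) = δ), then for every stationary T ⊆ κ there exists a single index i < κ such that for every club E ⊆ κ there is δ ∈ S with sup(A_{δ,i} ∩ E ∩ T) = δ. -/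
open Set Ordinal

noncomputable section

/-! If every index `i < κ` failed, witnessed by a club `F i`, then the diagonal intersection
`D = ⋄_{i<κ} F i` would be a club: it is unbounded because, iterating `ω` times a step that
meets every `F i` with `i < ξ` above `ξ`, one reaches (by regularity and `cf κ > ω`) a limit of
all these `F i`. Since `T` is stationary, `D ∩ T` is unbounded, so the `♣⁻` sequence guesses it
at some `δ` with index `i < δ`. Above `i` the set `D` lies inside `F i`, hence `A δ i ∩ F i ∩ T`
is still cofinal in `δ`, contradicting the choice of `F i`. -/

open Cardinal

section ConditionallyCompleteLinearOrderBot

variable {α : Type*} [ConditionallyCompleteLinearOrderBot α] {s t : Set α} {a b : α}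

theorem exists_mem_gt_of_csSup_eq (hs : sSup s = b) (ha : a < b) : ∃ x ∈ s, a < x := by
  rcases s.eq_empty_or_nonempty with rfl | hne
  · rw [csSup_empty] at hs
    exact absurd (hs ▸ ha) not_lt_bot
  · exact exists_lt_of_lt_csSup hne (hs ▸ ha)

theorem csSup_eq_of_bot_lt_of_forall_lt_exists_gt (hb : ⊥ < b) (hs : ∀ x ∈ s, x ≤ b)
    (hcof : ∀ w < b, ∃ x ∈ s, w < x) : sSup s = b := by
  obtain ⟨x, hx, -⟩ := hcof ⊥ hb
  exact csSup_eq_of_forall_le_of_forall_lt_exists_gt ⟨x, hx⟩ hs hcof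

theorem csSup_eq_of_inter_Ioi_subset (hs : sSup s = b) (ha : a < b) (hst : s ∩ Ioi a ⊆ t)
    (ht : ∀ x ∈ t, x ≤ b) : sSup t = b := by
  refine csSup_eq_of_bot_lt_of_forall_lt_exists_gt (bot_le.trans_lt ha) ht fun w hw ↦ ?_
  obtain ⟨x, hx, hwx⟩ := exists_mem_gt_of_csSup_eq hs (max_lt hw ha)
  exact ⟨x, hst ⟨hx, (le_max_right w a).trans_lt hwx⟩, (le_max_left w a).trans_lt hwx⟩

end ConditionallyCompleteLinearOrderBot

theorem IsClubIn.inter_Ioi_s10 {C : Set O} {δ α : O} (hC : IsClubIn C δ) (hα : α < δ) :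
    IsClubIn (C ∩ Ioi α) δ := by
  refine ⟨fun x hx ↦ hC.1 hx.1, fun ξ hξ ↦ ?_, fun γ hγ h0 hsup ↦ ?_⟩
  · obtain ⟨β, hβ, hβgt, hβlt⟩ := hC.2.1 (max α ξ) (max_lt hα hξ)
    exact ⟨β, ⟨hβ, (le_max_left α ξ).trans_lt hβgt⟩, (le_max_right α ξ).trans_lt hβgt, hβlt⟩
  · obtain ⟨β, ⟨⟨-, hαβ⟩, hβγ⟩, -⟩ := exists_mem_gt_of_csSup_eq hsup h0
    refine ⟨hC.2.2 γ hγ h0 (csSup_eq_of_inter_Ioi_subset hsup h0 ?_ fun x hx ↦ hx.2.le),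
      mem_Ioi.2 (hαβ.trans hβγ)⟩
    exact fun x hx ↦ ⟨hx.1.1.1, hx.1.2⟩

theorem IsStatIn.unbIn_inter {T C : Set O} {δ : O} (hT : IsStatIn T δ) (hC : IsClubIn C δ) :
    UnbIn (C ∩ T) δ := fun α hα ↦ by
  obtain ⟨β, hβT, hβC, hαβ⟩ := hT.2 _ (hC.inter_Ioi_s10 hα)
  exact ⟨β, ⟨hβC, hβT⟩, hαβ, hC.1 hβC⟩

theorem exists_lt_ord_forall_le_of_isRegular {κ : Cardinal.{0}} (hκ : κ.IsRegular) {ξ : O}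
    (hξ : ξ < κ.ord) {f : O → O} (hf : ∀ i < ξ, f i < κ.ord) :
    ∃ η < κ.ord, ∀ i < ξ, f i ≤ η := by
  have hbound : ∀ x ∈ f '' Iio ξ, x < κ.ord := by
    rintro _ ⟨i, hi, rfl⟩
    exact hf i hi
  have hcard : #(f '' Iio ξ) < (Ordinal.lift.{1} κ.ord).cof := by
    rw [← lift_cof, hκ.cof_ord]
    refine mk_image_le.trans_lt ?_
    rw [Cardinal.mk_Iio_ordinal, Cardinal.lift_lt]
    exact lt_ord.mp hξ
  exact ⟨sSup (f '' Iio ξ), sSup_lt_of_lt_cof hcard hbound, fun i hi ↦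
    le_csSup ⟨κ.ord, fun x hx ↦ (hbound x hx).le⟩ (mem_image_of_mem f hi)⟩

theorem exists_bound_of_forall_unbIn {κ : Cardinal.{0}} (hκ : κ.IsRegular) {F : O → Set O}
    (hF : ∀ i < κ.ord, UnbIn (F i) κ.ord) {ξ : O} (hξ : ξ < κ.ord) :
    ∃ η < κ.ord, ξ < η ∧ ∀ i < ξ, ∃ β ∈ F i, ξ < β ∧ β ≤ η := by
  choose! g hg using fun i (hi : i < κ.ord) ↦ hF i hi ξ hξ
  obtain ⟨η, hηκ, hgη⟩ :=
    exists_lt_ord_forall_le_of_isRegular hκ hξ fun i hi ↦ (hg i (hi.trans hξ)).2.2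
  have hξκ : ξ + 1 < κ.ord := by
    simpa using (isSuccLimit_ord hκ.aleph0_le).succ_lt hξ
  refine ⟨max (ξ + 1) η, max_lt hξκ hηκ, (lt_add_one ξ).trans_le (le_max_left _ _),
    fun i hi ↦ ?_⟩
  obtain ⟨hgF, hξg, -⟩ := hg i (hi.trans hξ)
  exact ⟨g i, hgF, hξg, (hgη i hi).trans (le_max_right _ _)⟩

theorem exists_gt_cofinally_map_lt {c : O} (hc : ℵ₀ < c.cof) {f : O → O}
    (hf : ∀ ξ < c, ξ < f ξ ∧ f ξ < c) {α : O} (hα : α < c) :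
    ∃ β < c, α < β ∧ ∀ γ < β, ∃ γ' ∈ Ioo γ β, f γ' < β := by
  have hβc : nfp f α < c := nfp_lt_ord hc (fun ξ hξ ↦ (hf ξ hξ).2) hα
  have hmono : ∀ n, f^[n] α < f^[n + 1] α := fun n ↦ by
    rw [Function.iterate_succ_apply']
    exact (hf _ ((iterate_le_nfp f α n).trans_lt hβc)).1
  have hiter : ∀ n, f^[n] α < nfp f α := fun n ↦
    (hmono n).trans_le (iterate_le_nfp f α (n + 1))
  refine ⟨nfp f α, hβc, hiter 0, fun γ hγ ↦ ?_⟩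
  obtain ⟨n, hn⟩ := lt_nfp_iff.1 hγ
  refine ⟨f^[n] α, ⟨hn, hiter n⟩, ?_⟩
  rw [← Function.iterate_succ_apply' f n α]
  exact hiter (n + 1)

def diagInter (δ : O) (F : O → Set O) : Set O := {β | β < δ ∧ ∀ i < β, β ∈ F i}

theorem mem_diagInter_of_sSup_eq {δ α : O} {F : O → Set O} (hF : ∀ i < δ, IsClubIn (F i) δ)
    (hα : α < δ) (h0 : 0 < α) (hsup : sSup (diagInter δ F ∩ Iio α) = α) :
    α ∈ diagInter δ F := by
  refine ⟨hα, fun i hi ↦ (hF i (hi.trans hα)).2.2 α hα h0 ?_⟩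
  refine csSup_eq_of_inter_Ioi_subset hsup hi ?_ fun x hx ↦ hx.2.le
  rintro β ⟨⟨hβD, hβα⟩, hiβ⟩
  exact ⟨hβD.2 i hiβ, hβα⟩

theorem unbIn_diagInter {κ : Cardinal.{0}} (hκ : κ.IsRegular) (hκ1 : ℵ₀ < κ) {F : O → Set O}
    (hF : ∀ i < κ.ord, IsClubIn (F i) κ.ord) : UnbIn (diagInter κ.ord F) κ.ord := by
  intro α hα
  choose! step hstep using fun ξ (hξ : ξ < κ.ord) ↦
    exists_bound_of_forall_unbIn hκ (fun i hi ↦ (hF i hi).2.1) hξ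
  obtain ⟨β, hβκ, hαβ, hβ⟩ := exists_gt_cofinally_map_lt (by rwa [hκ.cof_ord])
    (fun ξ hξ ↦ ⟨(hstep ξ hξ).2.1, (hstep ξ hξ).1⟩) hα
  have h0 : 0 < β := pos_of_gt hαβ
  refine ⟨β, ⟨hβκ, fun i hi ↦ (hF i (hi.trans hβκ)).2.2 β hβκ h0 ?_⟩, hαβ, hβκ⟩
  refine csSup_eq_of_bot_lt_of_forall_lt_exists_gt h0 (fun x hx ↦ hx.2.le) fun ξ hξ ↦ ?_
  obtain ⟨γ, ⟨hγ, hγβ⟩, hstepγ⟩ := hβ (max i ξ) (max_lt hi hξ)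
  obtain ⟨b, hb, hγb, hbη⟩ :=
    (hstep γ (hγβ.trans hβκ)).2.2 i ((le_max_left i ξ).trans_lt hγ)
  exact ⟨b, ⟨hb, hbη.trans_lt hstepγ⟩, (le_max_right i ξ).trans_lt (hγ.trans hγb)⟩

theorem isClubIn_diagInter {κ : Cardinal.{0}} (hκ : κ.IsRegular) (hκ1 : ℵ₀ < κ)
    {F : O → Set O} (hF : ∀ i < κ.ord, IsClubIn (F i) κ.ord) :
    IsClubIn (diagInter κ.ord F) κ.ord :=
  ⟨fun _ h ↦ h.1, unbIn_diagInter hκ hκ1 hF, fun _ hα h0 hsup ↦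
    mem_diagInter_of_sSup_eq hF hα h0 hsup⟩

theorem statement10_general (κ : Cardinal.{0}) (hκ : κ.IsRegular) (hκ1 : Cardinal.aleph0 < κ)
    (S : Set O)
    (A : O → O → Set O)
    (hsub : ∀ δ ∈ S, ∀ i < δ, A δ i ⊆ Iio δ)
    (hguess : ∀ Z : Set O, Z ⊆ Iio κ.ord → UnbIn Z κ.ord →
      ∃ δ ∈ S, ∃ i < δ, sSup (A δ i ∩ Z) = δ)
    (T : Set O) (hT : IsStatIn T κ.ord) :
    ∃ i < κ.ord, ∀ E, IsClubIn E κ.ord →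
      ∃ δ ∈ S, i < δ ∧ sSup (A δ i ∩ E ∩ T) = δ := by
  by_contra! hcon
  choose! F hFclub hFavoid using hcon
  have hD : IsClubIn (diagInter κ.ord F) κ.ord := isClubIn_diagInter hκ hκ1 hFclub
  obtain ⟨δ, hδS, i, hiδ, hsup⟩ :=
    hguess (diagInter κ.ord F ∩ T) (fun _ h ↦ hD.1 h.1) (hT.unbIn_inter hD)
  have hδκ : δ ≤ κ.ord := hsup ▸ csSup_le' fun x hx ↦ (hD.1 hx.2.1).le
  refine hFavoid i (hiδ.trans_le hδκ) δ hδS hiδ (csSup_eq_of_inter_Ioi_subset hsup hiδ ?_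
    fun x hx ↦ (hsub δ hδS i hiδ hx.1.1).le)
  rintro β ⟨⟨hβA, hβD, hβT⟩, hiβ⟩
  exact ⟨⟨hβA, hβD.2 i hiβ⟩, hβT⟩

/-- a single index works for a `♣⁻(S)`-sequence, relative to a stationary `T`. -/
theorem statement10 (κ : Cardinal.{0}) (hκ : κ.IsRegular) (hκ1 : Cardinal.aleph0 < κ)
    (S : Set O) (hS : IsStatIn S κ.ord)
    (A : O → O → Set O)
    (hsub : ∀ δ ∈ S, ∀ i < δ, A δ i ⊆ Iio δ)
    (hsize : ∀ δ ∈ S, ∀ i < δ, Cardinal.mk ↥(A δ i) < Cardinal.lift.{1} δ.card)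
    (hguess : ∀ Z : Set O, Z ⊆ Iio κ.ord → UnbIn Z κ.ord →
      ∃ δ ∈ S, ∃ i < δ, sSup (A δ i ∩ Z) = δ)
    (T : Set O) (hT : IsStatIn T κ.ord) :
    ∃ i < κ.ord, ∀ E, IsClubIn E κ.ord →
      ∃ δ ∈ S, i < δ ∧ sSup (A δ i ∩ E ∩ T) = δ :=
  statement10_general κ hκ hκ1 S A hsub hguess T hT
end
end

section
/- For every function f : κ → [κ]^{<ω}, the operator Φ_f defined on closed bounded-in-κ sets x by Φ_f(x) := x ∪ ⋃{f(γ) ∩ (sup(x ∩ γ), γ) : γ ∈ nacc(x)} is a postprocessing function; that is, for every x ∈ 𝒦(κ): (i) Φ_f(x) is club in sup(x); (ii) acc(Φ_f(x)) ⊆ acc(x); (iii) Φ_f(x) ∩ ᾱ = Φ_f(x ∩ ᾱ) for every ᾱ ∈ acc(Φ_f(x)). -/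
open Set Ordinal

noncomputable section

/-- `𝒦(κ)`: nonempty closed bounded sets of ordinals whose supremum is not attained. -/
def Kset (κ : O) (x : Set O) : Prop :=
  x.Nonempty ∧ x ⊆ Iio κ ∧ accP x ⊆ x ∧ sSup x ∉ x

def Phif (f : O → Set O) (x : Set O) : Set O :=
  x ∪ ⋃ γ ∈ nacc x, f γ ∩ Ioo (sSup (x ∩ Iio γ)) γ

/-- postprocessing function -/
def IsPP (κ : O) (Φ : Set O → Set O) : Prop :=
  ∀ x, Kset κ x →
    IsClubIn (Φ x) (sSup x) ∧
    accOf (Φ x) ⊆ accOf x ∧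
    ∀ α ∈ accOf (Φ x), Φ x ∩ Iio α = Φ (x ∩ Iio α)

/-!
Every point that `Φ_f` adds below a limit `α` of `Φ_f(x)` but above `sup (x ∩ α)` comes from the
single finite set `f γ₀`, where `γ₀ = min (x \ α)`. Hence `Φ_f(x)` cannot accumulate at an `α` at
which `x` does not, which gives closedness and `acc(Φ_f(x)) ⊆ acc(x)`. Coherence holds because
below a limit point `α` of `x` the intervals `(sup (x ∩ γ), γ)`, `γ ∈ nacc x`, are the same for
`x` and for `x ∩ α`.
-/

theorem csSup_lt_of_subset_Iic_union_finite {α : Type*} [ConditionallyCompleteLinearOrderBot α]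
    {A F : Set α} {s a : α} (hF : F.Finite) (hs : s < a) (hAa : A ⊆ Iio a)
    (hA : A ⊆ Iic s ∪ F) : sSup A < a := by
  set G := insert s (F ∩ Iio a)
  have hG : G.Finite := (hF.inter_of_left _).insert s
  have hGa : sSup G < a := (hG.csSup_lt_iff (insert_nonempty _ _)).2 <| by
    rintro b (rfl | hb)
    exacts [hs, hb.2]
  refine lt_of_le_of_lt (csSup_le' fun b hb => ?_) hGa
  rcases hA hb with hbs | hbF
  · exact hbs.trans (le_csSup hG.bddAbove (mem_insert _ _))
  · exact le_csSup hG.bddAbove (mem_insert_of_mem _ ⟨hbF, hAa hb⟩)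

theorem bddAbove_inter_Iio (x : Set O) (α : O) : BddAbove (x ∩ Iio α) :=
  bddAbove_Iio.mono inter_subset_right

theorem inter_Iio_inter_Iio_of_le (x : Set O) {α β : O} (h : β ≤ α) :
    x ∩ Iio α ∩ Iio β = x ∩ Iio β := by
  rw [inter_assoc, Iio_inter_Iio, min_eq_right h]

theorem lt_ssup {A : Set O} (hA : BddAbove A) {β : O} (hβ : β ∈ A) : β < ssup A :=
  (lt_add_one β).trans_le <|
    le_csSup (Monotone.map_bddAbove (fun _ _ h => add_le_add_left h 1) hA) ⟨β, hβ, rfl⟩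

theorem sSup_le_ssup {A : Set O} (hA : BddAbove A) : sSup A ≤ ssup A :=
  csSup_le' fun _ hb => (lt_ssup hA hb).le

theorem mem_accP_inter_Iio_iff {x : Set O} (hx : BddAbove x) {α β : O} (hβx : β ∈ x)
    (hβα : β < α) : β ∈ accP (x ∩ Iio α) ↔ β ∈ accP x := by
  simp only [accP, mem_ofPred_eq, inter_Iio_inter_Iio_of_le x hβα.le, lt_ssup hx hβx,
    lt_ssup (bddAbove_inter_Iio x α) ⟨hβx, hβα⟩, true_and]

theorem nacc_inter_Iio {x : Set O} (hx : BddAbove x) (α : O) :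
    nacc (x ∩ Iio α) = nacc x ∩ Iio α := by
  ext β
  simp only [nacc, accOf, mem_sdiff, mem_inter_iff, mem_Iio]
  constructor
  · rintro ⟨⟨hβx, hβα⟩, hn⟩
    exact ⟨⟨hβx, fun hp => hn ⟨⟨hβx, hβα⟩, (mem_accP_inter_Iio_iff hx hβx hβα).2 hp.2⟩⟩, hβα⟩
  · rintro ⟨⟨hβx, hn⟩, hβα⟩
    exact ⟨⟨hβx, hβα⟩, fun hp => hn ⟨hβx, (mem_accP_inter_Iio_iff hx hβx hβα).1 hp.2⟩⟩

theorem mem_Phif_iff {f : O → Set O} {x : Set O} {β : O} :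
    β ∈ Phif f x ↔
      β ∈ x ∨ ∃ γ ∈ nacc x, β ∈ f γ ∧ sSup (x ∩ Iio γ) < β ∧ β < γ := by
  simp only [Phif, mem_union, mem_iUnion₂, mem_inter_iff, mem_Ioo, exists_prop]

theorem Phif_inter_Iio_subset {f : O → Set O} {x : Set O} {α γ₀ : O}
    (hγ₀ : IsLeast (x ∩ Ici α) γ₀) :
    Phif f x ∩ Iio α ⊆ Iic (sSup (x ∩ Iio α)) ∪ f γ₀ := by
  rintro β ⟨hβ, hβα⟩
  rcases mem_Phif_iff.1 hβ with hβx | ⟨γ, hγ, hβγ, hlo, hhi⟩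
  · exact Or.inl (le_csSup (bddAbove_inter_Iio x α) ⟨hβx, hβα⟩)
  rcases lt_or_ge γ α with hγα | hαγ
  · exact Or.inl (hhi.le.trans (le_csSup (bddAbove_inter_Iio x α) ⟨hγ.1, hγα⟩))
  rcases (hγ₀.2 ⟨hγ.1, hαγ⟩).eq_or_lt with rfl | hγ₀γ
  · exact Or.inr hβγ
  -- `γ₀ < γ` would put `γ₀ ≤ sup (x ∩ γ) < β < α ≤ γ₀`
  exact absurd ((le_csSup (bddAbove_inter_Iio x γ) ⟨hγ₀.1.1, hγ₀γ⟩).trans_lt (hlo.trans hβα))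
    (not_lt.2 hγ₀.1.2)

theorem sSup_inter_Iio_eq_of_sSup_Phif_inter_Iio {f : O → Set O} (hf : ∀ γ, (f γ).Finite)
    {x : Set O} {α : O} (hα : α ≤ sSup x) (h : sSup (Phif f x ∩ Iio α) = α) :
    sSup (x ∩ Iio α) = α := by
  refine (csSup_le' fun _ hb => hb.2.le).antisymm (not_lt.1 fun hlt => ?_)
  have hne : (x ∩ Ici α).Nonempty := by
    by_contra! hempty
    have hxα : x ∩ Iio α = x := inter_eq_self_of_subset_left fun b hb =>
      mem_Iio.2 <| not_le.1 fun hαb => hempty.subset ⟨hb, hαb⟩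
    exact (hα.trans_eq (congrArg sSup hxα).symm).not_gt hlt
  exact (csSup_lt_of_subset_Iic_union_finite (hf _) hlt inter_subset_right
    (Phif_inter_Iio_subset (isLeast_csInf hne))).ne h

theorem Phif_inter_Iio {f : O → Set O} {x : Set O} (hx : BddAbove x) {α : O}
    (hα : sSup (x ∩ Iio α) = α) : Phif f x ∩ Iio α = Phif f (x ∩ Iio α) := by
  ext β
  simp only [mem_inter_iff, mem_Phif_iff, nacc_inter_Iio hx, mem_Iio]
  constructor
  · rintro ⟨hβx | ⟨γ, hγ, hβγ, hlo, hhi⟩, hβα⟩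
    · exact Or.inl ⟨hβx, hβα⟩
    -- `γ ≥ α` would give `α = sup (x ∩ α) ≤ sup (x ∩ γ) < β < α`
    have hγα : γ < α := not_le.1 fun hαγ => (hα.symm.trans_le
      (csSup_le_csSup' (bddAbove_inter_Iio x γ) (inter_subset_inter_right x
        (Iio_subset_Iio hαγ)))).not_gt (hlo.trans hβα)
    exact Or.inr ⟨γ, ⟨hγ, hγα⟩, hβγ, (inter_Iio_inter_Iio_of_le x hγα.le).symm ▸ hlo, hhi⟩
  · rintro (⟨hβx, hβα⟩ | ⟨γ, ⟨hγ, hγα⟩, hβγ, hlo, hhi⟩)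
    · exact ⟨Or.inl hβx, hβα⟩
    · exact ⟨Or.inr ⟨γ, hγ, hβγ, inter_Iio_inter_Iio_of_le x hγα.le ▸ hlo, hhi⟩, hhi.trans hγα⟩

namespace Kset

variable {κ : O} {x : Set O}

theorem bddAbove (hx : Kset κ x) : BddAbove x :=
  ⟨κ, fun _ hb => (hx.2.1 hb).le⟩

theorem lt_sSup (hx : Kset κ x) {β : O} (hβ : β ∈ x) : β < sSup x :=
  (le_csSup hx.bddAbove hβ).lt_of_ne fun h => hx.2.2.2 (h ▸ hβ)

theorem Phif_subset_Iio (hx : Kset κ x) (f : O → Set O) : Phif f x ⊆ Iio (sSup x) := by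
  intro β hβ
  rcases mem_Phif_iff.1 hβ with hβx | ⟨γ, hγ, -, -, hhi⟩
  exacts [hx.lt_sSup hβx, hhi.trans (hx.lt_sSup hγ.1)]

theorem mem_accP_of_sSup_Phif_inter_Iio (hx : Kset κ x) {f : O → Set O}
    (hf : ∀ γ, (f γ).Finite) {α : O} (hα : α < sSup x) (hα0 : 0 < α)
    (h : sSup (Phif f x ∩ Iio α) = α) : α ∈ accP x :=
  ⟨hα.trans_le (sSup_le_ssup hx.bddAbove), hα0,
    sSup_inter_Iio_eq_of_sSup_Phif_inter_Iio hf hα.le h⟩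

end Kset

/-- for every `f : κ → [κ]^{<ω}`, the operator `Φ_f` is a
postprocessing function. -/
theorem statement13 (κ : O) (f : O → Set O)
    (hf : ∀ γ, (f γ).Finite ∧ f γ ⊆ Iio κ) :
    IsPP κ (Phif f) := by
  intro x hx
  have hfin : ∀ γ, (f γ).Finite := fun γ => (hf γ).1
  have hacc : accOf (Phif f x) ⊆ accOf x := fun α ⟨hαΦ, _, hα0, hα⟩ =>
    have hαx := hx.mem_accP_of_sSup_Phif_inter_Iio hfin (hx.Phif_subset_Iio f hαΦ) hα0 hα
    ⟨hx.2.2.1 hαx, hαx⟩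
  refine ⟨⟨hx.Phif_subset_Iio f, fun α hα => ?_, fun α hα hα0 h => ?_⟩, hacc, fun α hα => ?_⟩
  · obtain ⟨β, hβx, hαβ⟩ := (lt_csSup_iff hx.bddAbove hx.1).1 hα
    exact ⟨β, Or.inl hβx, hαβ, hx.lt_sSup hβx⟩
  · exact Or.inl (hx.2.2.1 (hx.mem_accP_of_sSup_Phif_inter_Iio hfin hα hα0 h))
  · exact Phif_inter_Iio hx.bddAbove (hacc hα).2.2.2
end
end

section
/- If Φ : 𝒦(κ) → 𝒦(κ) is a postprocessing function and ⟨C_δ : δ < κ⟩ is a weakly coherent C-sequence (for every α < κ, |{C_δ ∩ α : δ < κ}| < κ), then ⟨Φ(C_δ) : δ ∈ acc(κ)⟩ is weakly coherent as well: for every α < κ, |{Φ(C_δ) ∩ α : δ ∈ acc(κ)}| < κ. -/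
open Set Ordinal

noncomputable section

/-! Fix `α < κ` and a limit `δ > α`, and let `β ≤ α` be the largest accumulation point of the
club `Φ (C δ)` that is `≤ α` (or `0`). As `Φ (C δ)` is closed, it has no accumulation point in
`(β, α]` at all, so only finitely many of its points lie in `[β, α)`; and coherence of `Φ` gives
`Φ (C δ) ∩ β = Φ (C δ ∩ β)`. So `Φ (C δ) ∩ α` is determined by `C δ ∩ α`, the ordinal `β ≤ α`
and a finite subset of `α`; by weak coherence of `C` there are fewer than `κ` such triples. -/

open Cardinal

section WellOrder

variable {α : Type*} [ConditionallyCompleteLinearOrderBot α]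

theorem sSup_inter_Iio_eq_of_le {s : Set α} {u : α} (h : u ≤ sSup (s ∩ Iio u)) :
    sSup (s ∩ Iio u) = u :=
  le_antisymm (csSup_le' fun _ hb => hb.2.le) h

variable [WellFoundedLT α]

theorem exists_sSup_inter_Iio_eq_of_infinite {t : Set α} {a : α} (ht : (t ∩ Iio a).Infinite) :
    ∃ u ≤ a, (t ∩ Iio u).Infinite ∧ sSup (t ∩ Iio u) = u := by
  set u := sInf {b : α | (t ∩ Iio b).Infinite}
  have hu : (t ∩ Iio u).Infinite := csInf_mem (s := {b : α | (t ∩ Iio b).Infinite}) ⟨a, ht⟩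
  refine ⟨u, csInf_le' ht, hu, sSup_inter_Iio_eq_of_le (not_lt.1 fun hlt => hu ?_)⟩
  set s := sSup (t ∩ Iio u)
  have hfin : (t ∩ Iio s).Finite := not_infinite.1 (notMem_of_lt_csInf' hlt)
  refine (hfin.insert s).subset fun z hz => ?_
  rcases (le_csSup ⟨u, fun b hb => hb.2.le⟩ hz).eq_or_lt with h | h
  · exact .inl h
  · exact .inr ⟨hz.1, h⟩

theorem finite_of_forall_sSup_inter_Iio_ne {t : Set α} {a b : α} (ht : t ⊆ Ico a b)
    (h : ∀ u ∈ Ioc a b, sSup (t ∩ Iio u) ≠ u) : t.Finite := by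
  by_contra hinf
  have hinfb : (t ∩ Iio b).Infinite := by rwa [inter_eq_left.2 (ht.trans Ico_subset_Iio_self)]
  obtain ⟨u, hub, hinfu, hsup⟩ := exists_sSup_inter_Iio_eq_of_infinite hinfb
  obtain ⟨z, hz, hzu⟩ := hinfu.nonempty
  exact h u ⟨(ht hz).1.trans_lt hzu, hub⟩ hsup

end WellOrder

theorem add_one_image_subset_Iic {D : Set O} {δ : O} (h : D ⊆ Iio δ) :
    (· + 1) '' D ⊆ Iic δ := by
  rintro _ ⟨c, hc, rfl⟩
  exact mem_Iic.2 (Order.add_one_le_of_lt (mem_Iio.1 (h hc)))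

namespace IsClubIn

variable {D : Set O} {δ : O}

theorem sSup_eq (hD : IsClubIn D δ) : sSup D = δ := by
  refine le_antisymm (csSup_le' fun b hb => (hD.1 hb).le) (le_of_forall_lt fun γ hγ => ?_)
  obtain ⟨b, hb, hγb, -⟩ := hD.2.1 γ hγ
  exact hγb.trans_le (le_csSup ⟨δ, fun b hb => (hD.1 hb).le⟩ hb)

theorem lt_ssup (hD : IsClubIn D δ) {α : O} (hα : α < δ) : α < ssup D := by
  obtain ⟨d, hd, hαd, -⟩ := hD.2.1 α hα
  have hbdd : BddAbove ((· + 1) '' D) := ⟨δ, add_one_image_subset_Iic hD.1⟩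
  exact (hαd.trans (Order.lt_add_one_iff.2 le_rfl)).trans_le (le_csSup hbdd ⟨d, hd, rfl⟩)

theorem mem_accOf (hD : IsClubIn D δ) {u : O} (huδ : u < δ) (hu : 0 < u)
    (hsup : sSup (D ∩ Iio u) = u) : u ∈ accOf D :=
  ⟨hD.2.2 u huδ hu hsup, hD.lt_ssup huδ, hu, hsup⟩

theorem kset (hD : IsClubIn D δ) (hδ : 0 < δ) {κ : O} (hδκ : δ ≤ κ) : Kset κ D := by
  obtain ⟨d, hd, -⟩ := hD.2.1 0 hδ
  refine ⟨⟨d, hd⟩, fun _ h => (hD.1 h).trans_le hδκ, fun γ hγ => ?_, ?_⟩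
  · exact hD.2.2 γ (hγ.1.trans_le (csSup_le' (add_one_image_subset_Iic hD.1))) hγ.2.1 hγ.2.2
  · rw [hD.sSup_eq]
    exact fun h => lt_irrefl δ (hD.1 h)

theorem exists_inter_Iio_eq_union_finite (hD : IsClubIn D δ) {α : O} (hα : α < δ) :
    ∃ β ≤ α, (β = 0 ∨ β ∈ accOf D) ∧
      ∃ t : Set O, t.Finite ∧ t ⊆ Iio α ∧ D ∩ Iio α = D ∩ Iio β ∪ t := by
  set β := sSup (accOf D ∩ Iic α)
  have hβα : β ≤ α := csSup_le' fun _ hb => hb.2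
  have hβ : β = 0 ∨ β ∈ accOf D := by
    refine (eq_zero_or_pos β).imp_right fun hβ0 => hD.mem_accOf (hβα.trans_lt hα) hβ0 ?_
    -- `β` is a limit of accumulation points of `D`
    refine sSup_inter_Iio_eq_of_le (le_of_forall_lt fun γ hγ => ?_)
    obtain ⟨p, hp, hγp⟩ := exists_lt_of_lt_csSup' hγ
    have hpβ : p ≤ β := le_csSup ⟨α, fun _ hb => hb.2⟩ hp
    calc γ < p := hγp
      _ = sSup (D ∩ Iio p) := hp.1.2.2.2.symm
      _ ≤ sSup (D ∩ Iio β) :=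
        csSup_le_csSup' ⟨β, fun _ hb => hb.2.le⟩ (inter_subset_inter_right _ (Iio_subset_Iio hpβ))
  refine ⟨β, hβα, hβ, D ∩ Ico β α, ?_, fun _ hz => hz.2.2, ?_⟩
  · refine finite_of_forall_sSup_inter_Iio_ne inter_subset_right fun u ⟨hβu, huα⟩ hsup => ?_
    have hu : u ∈ accOf D := by
      refine hD.mem_accOf (huα.trans_lt hα) (pos_of_gt hβu) (sSup_inter_Iio_eq_of_le ?_)
      calc u = sSup (D ∩ Ico β α ∩ Iio u) := hsup.symm
        _ ≤ sSup (D ∩ Iio u) :=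
          csSup_le_csSup' ⟨u, fun _ hb => hb.2.le⟩ (inter_subset_inter_left _ inter_subset_left)
    exact (le_csSup ⟨α, fun _ hb => hb.2⟩ (show u ∈ accOf D ∩ Iic α from ⟨hu, huα⟩)).not_gt hβu
  · rw [← Iio_union_Ico_eq_Iio hβα, inter_union_distrib_left]

end IsClubIn

theorem IsPP.inter_Iio_finite_or_eq_union {κ : O} {Φ : Set O → Set O} (hΦ : IsPP κ Φ)
    {x : Set O} (hx : Kset κ x) (α : O) :
    (Φ x ∩ Iio α).Finite ∨ ∃ β ≤ α, ∃ t : Set O, t.Finite ∧ t ⊆ Iio α ∧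
      Φ x ∩ Iio α = Φ (x ∩ Iio α ∩ Iio β) ∪ t := by
  obtain ⟨hclub, -, hcoh⟩ := hΦ x hx
  rcases lt_or_ge α (sSup x) with hα | hα
  · obtain ⟨β, hβα, hβ | hβ, t, ht, htα, heq⟩ := hclub.exists_inter_Iio_eq_union_finite hα
    · left
      rwa [heq, hβ, Iio_zero_eq_empty, inter_empty, empty_union]
    · right
      refine ⟨β, hβα, t, ht, htα, ?_⟩
      rw [inter_assoc, Iio_inter_Iio, min_eq_right hβα, heq, hcoh β hβ]
  · right
    refine ⟨sSup x, hα, ∅, finite_empty, empty_subset _, ?_⟩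
    have hx_sub : x ⊆ Iio (sSup x) := fun z hz =>
      (le_csSup ⟨κ, fun _ hb => (hx.2.1 hb).le⟩ hz).lt_of_ne (ne_of_mem_of_not_mem hz hx.2.2.2)
    rw [union_empty, inter_assoc, Iio_inter_Iio, min_eq_right hα, inter_eq_left.2 hx_sub,
      inter_eq_left.2 (hclub.1.trans (Iio_subset_Iio hα))]

theorem mk_setOf_finite_subset_le {α : Type*} (s : Set α) :
    #{t : Set α | t.Finite ∧ t ⊆ s} ≤ max ℵ₀ #s := by
  classical
  have hsurj : Function.Surjective fun u : Finset s =>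
      (⟨Subtype.val '' (u : Set s), u.finite_toSet.image _, by simp⟩ :
        {t : Set α | t.Finite ∧ t ⊆ s}) := by
    rintro ⟨t, ht, hts⟩
    refine ⟨(ht.preimage Subtype.val_injective.injOn).toFinset, Subtype.ext ?_⟩
    simpa using hts
  calc _ ≤ #(Finset s) := mk_le_of_surjective hsurj
    _ ≤ #(List s) := mk_le_of_surjective List.toFinset_surjective
    _ ≤ max ℵ₀ #s := mk_list_le_max _

theorem mk_Iio_lt_lift_of_lt_ord {κ : Cardinal.{0}} {α : O} (hα : α < κ.ord) :
    #(Iio α) < Cardinal.lift.{1} κ := by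
  rwa [Cardinal.mk_Iio_ordinal, Cardinal.lift_lt, ← lt_ord]

theorem statement15_general (κ : Cardinal.{0}) (hκ1 : Cardinal.aleph0 < κ)
    (Φ : Set O → Set O) (hΦ : IsPP κ.ord Φ)
    (C : O → Set O)
    (hC : ∀ δ : O, δ < κ.ord → Order.IsSuccLimit δ → IsClubIn (C δ) δ)
    (hwc : ∀ α < κ.ord,
      Cardinal.mk ↥((fun δ => C δ ∩ Iio α) '' Iio κ.ord) < Cardinal.lift.{1} κ) :
    ∀ α < κ.ord,
      Cardinal.mk ↥((fun δ => Φ (C δ) ∩ Iio α) '' {δ : O | δ < κ.ord ∧ Order.IsSuccLimit δ})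
        < Cardinal.lift.{1} κ := by
  intro α hα
  have hκ : ℵ₀ < Cardinal.lift.{1} κ := aleph0_lt_lift.2 hκ1
  set T := {t : Set O | t.Finite ∧ t ⊆ Iio α}
  set A := (fun δ => C δ ∩ Iio α) '' Iio κ.ord
  let F : A × Iic α × T → Set O := fun p => Φ (p.1.1 ∩ Iio p.2.1.1) ∪ p.2.2.1
  have hcover : (fun δ => Φ (C δ) ∩ Iio α) '' {δ : O | δ < κ.ord ∧ Order.IsSuccLimit δ} ⊆
      T ∪ range F := by
    rintro _ ⟨δ, ⟨hδκ, hδ⟩, rfl⟩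
    rcases hΦ.inter_Iio_finite_or_eq_union ((hC δ hδκ hδ).kset hδ.bot_lt hδκ.le) α with
      hfin | ⟨β, hβα, t, ht, htα, heq⟩
    · exact .inl ⟨hfin, inter_subset_right⟩
    · exact .inr ⟨(⟨_, δ, hδκ, rfl⟩, ⟨β, hβα⟩, ⟨t, ht, htα⟩), heq.symm⟩
  have hT : #T < Cardinal.lift.{1} κ :=
    (mk_setOf_finite_subset_le _).trans_lt (max_lt hκ (mk_Iio_lt_lift_of_lt_ord hα))
  have hIic : #(Iic α) < Cardinal.lift.{1} κ := by
    rw [← Order.Iio_succ]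
    exact mk_Iio_lt_lift_of_lt_ord ((isSuccLimit_ord hκ1.le).succ_lt hα)
  have hF : #(range F) < Cardinal.lift.{1} κ := by
    refine mk_range_le.trans_lt ?_
    simp only [mk_prod, Cardinal.lift_id]
    exact mul_lt_of_lt hκ.le (hwc α hα) (mul_lt_of_lt hκ.le hIic hT)
  calc _ ≤ #(T ∪ range F : Set (Set O)) := mk_le_mk_of_subset hcover
    _ ≤ #T + #(range F) := mk_union_le _ _
    _ < Cardinal.lift.{1} κ := add_lt_of_lt hκ.le hT hF

/-- postprocessing functions preserve weak coherence of C-sequences. -/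
theorem statement15 (κ : Cardinal.{0}) (hκ : κ.IsRegular) (hκ1 : Cardinal.aleph0 < κ)
    (Φ : Set O → Set O) (hΦ : IsPP κ.ord Φ)
    (C : O → Set O)
    (hC : ∀ δ : O, δ < κ.ord → Order.IsSuccLimit δ → IsClubIn (C δ) δ)
    (hwc : ∀ α < κ.ord,
      Cardinal.mk ↥((fun δ => C δ ∩ Iio α) '' Iio κ.ord) < Cardinal.lift.{1} κ) :
    ∀ α < κ.ord,
      Cardinal.mk ↥((fun δ => Φ (C δ) ∩ Iio α) '' {δ : O | δ < κ.ord ∧ Order.IsSuccLimit δ})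
        < Cardinal.lift.{1} κ :=
  statement15_general κ hκ1 Φ hΦ C hC hwc
end
end
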